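/- Let α : ℝ⁴ → ℝ be smooth, let U ⊆ ℝ² be open, and let u : U → ℝ be a smooth solution of u_{tx} = u_t·α(x, u, u_x, u_{xx}) on U with u_t(t,x) ≠ 0 for all (t,x) ∈ U. Let W ⊆ ℝ² be an open set containing {(x, u(t,x)) : (t,x) ∈ U} and let g : W → ℝ be smooth with u_x(t,x) = g(x, u(t,x)) for all (t,x) ∈ U. Then for every (t,x) ∈ U, writing (I,J) = (x, u(t,x)), one has ∂₂g(I,J) = α(I, J, g(I,J), ∂₁g(I,J) + g(I,J)·∂₂g(I,J)). -/

import Mathlib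

open Real

/-- Partial derivative of a function of two real variables w.r.t. its first argument. -/
noncomputable def d1 (f : ℝ → ℝ → ℝ) (a b : ℝ) : ℝ := deriv (fun s => f s b) a

/-- Partial derivative of a function of two real variables w.r.t. its second argument. -/
noncomputable def d2 (f : ℝ → ℝ → ℝ) (a b : ℝ) : ℝ := deriv (fun s => f a s) b

/-- A function of two real variables is smooth (infinitely differentiable). -/
def Smooth2 (f : ℝ → ℝ → ℝ) : Prop := ContDiff ℝ (⊤ : ℕ∞) (fun p : ℝ × ℝ => f p.1 p.2)

/-- A function of two real variables is smooth on a set `U ⊆ ℝ²`. -/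
def Smooth2On (f : ℝ → ℝ → ℝ) (U : Set (ℝ × ℝ)) : Prop :=
  ContDiffOn ℝ (⊤ : ℕ∞) (fun p : ℝ × ℝ => f p.1 p.2) U

/-!
Differentiating the identity `u_x = g(x, u)` in `t` and in `x` by the chain rule gives
`u_{tx} = u_t·g_J(x, u)` and `u_{xx} = g_I(x, u) + g(x, u)·g_J(x, u)`. Substituting both into
the equation, `u_t·g_J = u_t·α(x, u, g, g_I + g·g_J)`, and `u_t ≠ 0` can be cancelled.
-/

open Topology

lemma Smooth2On.differentiableAt {f : ℝ → ℝ → ℝ} {U : Set (ℝ × ℝ)} (hf : Smooth2On f U)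
    (hU : IsOpen U) {p : ℝ × ℝ} (hp : p ∈ U) :
    DifferentiableAt ℝ (fun q : ℝ × ℝ => f q.1 q.2) p :=
  (hf.differentiableOn (by simp)).differentiableAt (hU.mem_nhds hp)

section PartialDerivatives

variable {f : ℝ → ℝ → ℝ} {a b : ℝ}

lemma d1_eq_fderiv_apply (hf : DifferentiableAt ℝ (fun q : ℝ × ℝ => f q.1 q.2) (a, b)) :
    d1 f a b = fderiv ℝ (fun q : ℝ × ℝ => f q.1 q.2) (a, b) (1, 0) := by
  have h := hf.hasFDerivAt.comp_hasDerivAt a ((hasDerivAt_id a).prodMk (hasDerivAt_const a b))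
  exact h.deriv

lemma d2_eq_fderiv_apply (hf : DifferentiableAt ℝ (fun q : ℝ × ℝ => f q.1 q.2) (a, b)) :
    d2 f a b = fderiv ℝ (fun q : ℝ × ℝ => f q.1 q.2) (a, b) (0, 1) := by
  have h := hf.hasFDerivAt.comp_hasDerivAt b ((hasDerivAt_const b a).prodMk (hasDerivAt_id b))
  exact h.deriv

lemma fderiv_uncurry_apply (hf : DifferentiableAt ℝ (fun q : ℝ × ℝ => f q.1 q.2) (a, b))
    (v w : ℝ) :
    fderiv ℝ (fun q : ℝ × ℝ => f q.1 q.2) (a, b) (v, w) = v * d1 f a b + w * d2 f a b := by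
  have hvw : ((v, w) : ℝ × ℝ) = v • ((1 : ℝ), (0 : ℝ)) + w • ((0 : ℝ), (1 : ℝ)) := by simp
  rw [hvw, map_add, map_smul, map_smul, d1_eq_fderiv_apply hf, d2_eq_fderiv_apply hf,
    smul_eq_mul, smul_eq_mul]

lemma hasDerivAt_comp_d1_d2 {γ₁ γ₂ : ℝ → ℝ} {v w s : ℝ}
    (hf : DifferentiableAt ℝ (fun q : ℝ × ℝ => f q.1 q.2) (γ₁ s, γ₂ s))
    (h₁ : HasDerivAt γ₁ v s) (h₂ : HasDerivAt γ₂ w s) :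
    HasDerivAt (fun r => f (γ₁ r) (γ₂ r))
      (v * d1 f (γ₁ s) (γ₂ s) + w * d2 f (γ₁ s) (γ₂ s)) s := by
  rw [← fderiv_uncurry_apply hf]
  exact hf.hasFDerivAt.comp_hasDerivAt s (h₁.prodMk h₂)

lemma hasDerivAt_d1 (hf : DifferentiableAt ℝ (fun q : ℝ × ℝ => f q.1 q.2) (a, b)) :
    HasDerivAt (fun s => f s b) (d1 f a b) a := by
  simpa using hasDerivAt_comp_d1_d2 (γ₁ := fun s => s) (γ₂ := fun _ => b) hf
    (hasDerivAt_id a) (hasDerivAt_const a b)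

lemma hasDerivAt_d2 (hf : DifferentiableAt ℝ (fun q : ℝ × ℝ => f q.1 q.2) (a, b)) :
    HasDerivAt (fun s => f a s) (d2 f a b) b := by
  simpa using hasDerivAt_comp_d1_d2 (γ₁ := fun _ => a) (γ₂ := fun s => s) hf
    (hasDerivAt_const b a) (hasDerivAt_id b)

end PartialDerivatives

section Quotient

variable {U : Set (ℝ × ℝ)} {u g : ℝ → ℝ → ℝ} {t x : ℝ}

lemma d1_d2_eq_of_d2_eq_comp (hU : IsOpen U) (hp : (t, x) ∈ U)
    (hu : DifferentiableAt ℝ (fun q : ℝ × ℝ => u q.1 q.2) (t, x))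
    (hg : DifferentiableAt ℝ (fun q : ℝ × ℝ => g q.1 q.2) (x, u t x))
    (hcon : ∀ p ∈ U, d2 u p.1 p.2 = g p.2 (u p.1 p.2)) :
    d1 (d2 u) t x = d1 u t x * d2 g x (u t x) := by
  have hnear : ∀ᶠ s in 𝓝 t, (s, x) ∈ U :=
    (continuous_id.prodMk continuous_const).continuousAt.preimage_mem_nhds (hU.mem_nhds hp)
  have heq : (fun s => d2 u s x) =ᶠ[𝓝 t] fun s => g x (u s x) :=
    hnear.mono fun s hs => hcon (s, x) hs
  have hchain := hasDerivAt_comp_d1_d2 (γ₁ := fun _ => x) (γ₂ := fun s => u s x) hg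
    (hasDerivAt_const t x) (hasDerivAt_d1 hu)
  rw [d1, heq.deriv_eq, hchain.deriv, zero_mul, zero_add]

lemma d2_d2_eq_of_d2_eq_comp (hU : IsOpen U) (hp : (t, x) ∈ U)
    (hu : DifferentiableAt ℝ (fun q : ℝ × ℝ => u q.1 q.2) (t, x))
    (hg : DifferentiableAt ℝ (fun q : ℝ × ℝ => g q.1 q.2) (x, u t x))
    (hcon : ∀ p ∈ U, d2 u p.1 p.2 = g p.2 (u p.1 p.2)) :
    d2 (d2 u) t x = d1 g x (u t x) + g x (u t x) * d2 g x (u t x) := by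
  have hnear : ∀ᶠ s in 𝓝 x, (t, s) ∈ U :=
    (continuous_const.prodMk continuous_id).continuousAt.preimage_mem_nhds (hU.mem_nhds hp)
  have heq : (fun s => d2 u t s) =ᶠ[𝓝 x] fun s => g s (u t s) :=
    hnear.mono fun s hs => hcon (t, s) hs
  have hchain := hasDerivAt_comp_d1_d2 (γ₁ := fun s => s) (γ₂ := fun s => u t s) hg
    (hasDerivAt_id x) (hasDerivAt_d2 hu)
  rw [d2, heq.deriv_eq, hchain.deriv, one_mul, hcon (t, x) hp]

end Quotient

theorem type3_quotient_general
    (α : ℝ → ℝ → ℝ → ℝ → ℝ)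
    (U : Set (ℝ × ℝ)) (hU : IsOpen U)
    (u : ℝ → ℝ → ℝ) (hu : Smooth2On u U)
    (hsol : ∀ p ∈ U,
      d1 (d2 u) p.1 p.2
        = d1 u p.1 p.2 * α p.2 (u p.1 p.2) (d2 u p.1 p.2) (d2 (d2 u) p.1 p.2))
    (hut : ∀ p ∈ U, d1 u p.1 p.2 ≠ 0)
    (W : Set (ℝ × ℝ)) (hW : IsOpen W)
    (hWsub : ∀ p ∈ U, (p.2, u p.1 p.2) ∈ W)
    (g : ℝ → ℝ → ℝ) (hg : Smooth2On g W)
    (hcon : ∀ p ∈ U, d2 u p.1 p.2 = g p.2 (u p.1 p.2)) :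
    ∀ p ∈ U,
      d2 g p.2 (u p.1 p.2)
        = α p.2 (u p.1 p.2) (g p.2 (u p.1 p.2))
            (d1 g p.2 (u p.1 p.2) + g p.2 (u p.1 p.2) * d2 g p.2 (u p.1 p.2)) := by
  rintro ⟨t, x⟩ hp
  have hud := hu.differentiableAt hU hp
  have hgd := hg.differentiableAt hW (hWsub (t, x) hp)
  have h := hsol (t, x) hp
  rw [d1_d2_eq_of_d2_eq_comp hU hp hud hgd hcon, d2_d2_eq_of_d2_eq_comp hU hp hud hgd hcon,
    hcon (t, x) hp] at h
  exact mul_left_cancel₀ (hut (t, x) hp) h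

/-- Quotient of `u_{tx} = u_t·α(x, u, u_x, u_{xx})` (symmetries `f(t)∂_t`): along a
solution with `u_t ≠ 0`, a smooth `g` with `u_x = g(x, u)` satisfies
`g_J = α(I, J, g, g_I + g·g_J)` at `(I,J) = (x, u)`. -/
theorem type3_quotient
    (α : ℝ → ℝ → ℝ → ℝ → ℝ)
    (hα : ContDiff ℝ (⊤ : ℕ∞)
      (fun q : ℝ × ℝ × ℝ × ℝ => α q.1 q.2.1 q.2.2.1 q.2.2.2))
    (U : Set (ℝ × ℝ)) (hU : IsOpen U)
    (u : ℝ → ℝ → ℝ) (hu : Smooth2On u U)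
    (hsol : ∀ p ∈ U,
      d1 (d2 u) p.1 p.2
        = d1 u p.1 p.2 * α p.2 (u p.1 p.2) (d2 u p.1 p.2) (d2 (d2 u) p.1 p.2))
    (hut : ∀ p ∈ U, d1 u p.1 p.2 ≠ 0)
    (W : Set (ℝ × ℝ)) (hW : IsOpen W)
    (hWsub : ∀ p ∈ U, (p.2, u p.1 p.2) ∈ W)
    (g : ℝ → ℝ → ℝ) (hg : Smooth2On g W)
    (hcon : ∀ p ∈ U, d2 u p.1 p.2 = g p.2 (u p.1 p.2)) :
    ∀ p ∈ U,
      d2 g p.2 (u p.1 p.2)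
        = α p.2 (u p.1 p.2) (g p.2 (u p.1 p.2))
            (d1 g p.2 (u p.1 p.2) + g p.2 (u p.1 p.2) * d2 g p.2 (u p.1 p.2)) :=
  type3_quotient_general α U hU u hu hsol hut W hW hWsub g hg hcon
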